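/- (Stability of interpolation under alphabet extension) Let 1 ≤ c ≤ d. In k[x_1,...,x_d, v_1,...,v_d], for each 1 ≤ i ≤ c one has Σ_{k=1}^{c} x_i^{k-1} · ( v_k + (-1)^{c-k} Σ_{l=c+1}^{d} s(l−c−1, c−k)(x_1,...,x_c) · v_l ) = Σ_{k=1}^{d} x_i^{k-1} v_k, where s(p,q)(X) := Σ_{m+n=q}(-1)^m h_{p+m+1}(X) e_n(X) is the hook Schur polynomial s_{(p+1,1^q)} in X = {x_1,...,x_c}. -/

import Mathlib

open Finset

variable {R : Type*} [CommRing R]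

/-- The elementary symmetric polynomial `e k` of a finite family of ring elements. -/
def esym {ι : Type*} [Fintype ι] [DecidableEq ι] (x : ι → R) (k : ℕ) : R :=
  ∑ s ∈ Finset.univ.powersetCard k, ∏ i ∈ s, x i

/-- The complete homogeneous symmetric polynomial `h k` of a finite family of ring
elements (sum of all monomials of degree `k`). -/
def hsym {ι : Type*} [Fintype ι] [DecidableEq ι] (x : ι → R) (k : ℕ) : R :=
  ∑ μ : Sym ι k, (μ.1.map x).prod

/-- The hook Schur polynomial `s(i,j) = s_{(i+1,1^j)}` of a finite family. -/
def hookS {ι : Type*} [Fintype ι] [DecidableEq ι] (x : ι → R) (i j : ℕ) : R :=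
  ∑ p ∈ Finset.HasAntidiagonal.antidiagonal j, (-1 : R) ^ p.1 * hsym x (i + p.1 + 1) * esym x p.2

/-- The complete symmetric function `h j` of the difference alphabet `X - X'`. -/
def hdiff {ι κ : Type*} [Fintype ι] [DecidableEq ι] [Fintype κ] [DecidableEq κ]
    (x : ι → R) (x' : κ → R) (j : ℕ) : R :=
  ∑ p ∈ Finset.HasAntidiagonal.antidiagonal j, (-1 : R) ^ p.2 * hsym x p.1 * esym x' p.2

/-- The elementary symmetric function `e j` of the difference alphabet `X - X'`. -/
def ediff {ι κ : Type*} [Fintype ι] [DecidableEq ι] [Fintype κ] [DecidableEq κ]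
    (x : ι → R) (x' : κ → R) (j : ℕ) : R :=
  ∑ p ∈ Finset.HasAntidiagonal.antidiagonal j, (-1 : R) ^ p.2 * esym x p.1 * hsym x' p.2

/-- The power sum `p k` of a finite family of ring elements. -/
def psum' {ι : Type*} [Fintype ι] (x : ι → R) (k : ℕ) : R :=
  ∑ i, x i ^ k

/-- The elementary symmetric polynomial of a multiset of ring elements. -/
def esymM (s : Multiset R) (k : ℕ) : R :=
  ((s.powersetCard k).map Multiset.prod).sum

/-!
Let `H(t) = ∑ hₙ tⁿ`, `E(t) = ∑ (-1)ⁿ eₙ tⁿ = ∏ⱼ (1 - xⱼ t)` and `G(t) = ∑ yᵐ tᵐ` with `y = xᵢ`.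
Adding one variable to the alphabet multiplies `E` by `1 - z t` and divides `H` by it, so
`H E = 1`; and `E G = ∏_{j ≠ i} (1 - xⱼ t)` has degree `< c`. The signed hooks `(-1)ʲ s(p, j)` are
the coefficients of `H₊ E`, where `H₊ = ∑ h_{p+1+a} tᵃ`, so `∑ₖ yᵏ⁻¹ (-1)ᶜ⁻ᵏ s(p, c - k)` is the
coefficient of `t^(c-1)` in `H₊ (E G)`. Since `E G` has degree `< c`, this is the coefficient of
`t^(p+c)` in `H (E G) = G`, that is `y^(p+c)`. Taking `p = l - c - 1` for each `l > c` gives the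
theorem.
-/

open PowerSeries

lemma Multiset.esymm_cons_succ {S : Type*} [CommSemiring S] (a : S) (s : Multiset S) (n : ℕ) :
    (a ::ₘ s).esymm (n + 1) = s.esymm (n + 1) + a * s.esymm n := by
  simp [Multiset.esymm, Multiset.powersetCard_cons, Multiset.map_map, Multiset.sum_map_mul_left]

lemma Finset.sum_Icc_one_eq_sum_antidiagonal {M : Type*} [AddCommMonoid M] (f : ℕ → ℕ → M)
    (n : ℕ) : ∑ k ∈ Icc 1 (n + 1), f (k - 1) (n + 1 - k) = ∑ q ∈ antidiagonal n, f q.1 q.2 := by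
  rw [Nat.sum_antidiagonal_eq_sum_range_succ, ← Ico_add_one_right_eq_Icc, sum_Ico_eq_sum_range]
  refine sum_congr rfl fun k _ => ?_
  congr 1 <;> omega

lemma PowerSeries.coeff_add_mul_eq_coeff_shift_mul {S : Type*} [Semiring S] (f g : S⟦X⟧) (k : ℕ) {n : ℕ}
    (hg : ∀ m, n < m → coeff m g = 0) :
    coeff (k + n) (f * g) = coeff n (mk (fun a => coeff (k + a) f) * g) := by
  rw [coeff_mul, coeff_mul, Nat.sum_antidiagonal_eq_sum_range_succ_mk,
    Nat.sum_antidiagonal_eq_sum_range_succ_mk, Nat.succ_eq_add_one, add_assoc, sum_range_add,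
    sum_eq_zero fun a ha => by rw [hg _ (by simp at ha; omega), mul_zero], zero_add]
  refine sum_congr rfl fun a _ => ?_
  simp only [coeff_mk, Nat.add_sub_add_left]

lemma PowerSeries.one_sub_C_mul_X_mul_mk_pow (y : R) :
    (1 - C y * X) * mk (fun n => y ^ n) = 1 := by
  ext (_ | n) <;> simp [sub_mul, mul_assoc, coeff_succ_X_mul, coeff_one, pow_succ']

section Symmetric

variable {ι κ : Type*} [Fintype ι] [DecidableEq ι] [Fintype κ] [DecidableEq κ]

lemma esym_eq_esymm (x : ι → R) (n : ℕ) : esym x n = (univ.val.map x).esymm n :=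
  (Finset.esymm_map_val x univ n).symm

lemma esym_zero (x : ι → R) : esym x 0 = 1 := by
  simp [esym]

lemma hsym_zero (x : ι → R) : hsym x 0 = 1 := by
  simp [hsym, Sym.eq_nil_of_card_zero]

lemma esym_eq_zero_of_card_lt (x : ι → R) {n : ℕ} (hn : Fintype.card ι < n) :
    esym x n = 0 := by
  simp [esym, Finset.powersetCard_eq_empty.mpr (by simpa using hn : #(univ : Finset ι) < n)]

lemma hsym_of_isEmpty [IsEmpty ι] (x : ι → R) (n : ℕ) : hsym x (n + 1) = 0 := by
  simp [hsym]

lemma esym_comp_equiv (e : ι ≃ κ) (x : κ → R) (n : ℕ) : esym (x ∘ e) n = esym x n := by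
  rw [esym_eq_esymm, esym_eq_esymm, ← Multiset.map_map]
  congr 2
  exact congrArg Finset.val (Finset.map_univ_equiv e)

lemma hsym_comp_equiv (e : ι ≃ κ) (x : κ → R) (n : ℕ) : hsym (x ∘ e) n = hsym x n :=
  Fintype.sum_equiv (Sym.equivCongr e) _ _ fun μ => by simp [Sym.equivCongr, Multiset.map_map]

lemma esym_option_succ (x : Option ι → R) (n : ℕ) :
    esym x (n + 1) = esym (x ∘ some) (n + 1) + x none * esym (x ∘ some) n := by
  have huniv : (univ : Finset (Option ι)).val = none ::ₘ univ.val.map some := rfl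
  rw [esym_eq_esymm, esym_eq_esymm, esym_eq_esymm, huniv, Multiset.map_cons, Multiset.map_map]
  exact Multiset.esymm_cons_succ (x none) (univ.val.map (x ∘ some)) n

lemma hsym_option_succ (x : Option ι → R) (n : ℕ) :
    hsym x (n + 1) = x none * hsym x n + hsym (x ∘ some) (n + 1) := by
  rw [hsym, ← Equiv.sum_comp symOptionSuccEquiv.symm, Fintype.sum_sum_type, hsym, hsym,
    Finset.mul_sum]
  congr 1 <;> refine Finset.sum_congr rfl fun μ _ => ?_
  · simp [symOptionSuccEquiv, Sym.cons]
  · simp [symOptionSuccEquiv, Sym.map, Multiset.map_map]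

def hsymSeries (x : ι → R) : R⟦X⟧ := mk (hsym x)

def esymSeries (x : ι → R) : R⟦X⟧ := mk fun n => (-1) ^ n * esym x n

lemma hsymSeries_comp_equiv (e : ι ≃ κ) (x : κ → R) : hsymSeries (x ∘ e) = hsymSeries x := by
  simp only [hsymSeries, funext (hsym_comp_equiv e x)]

lemma esymSeries_comp_equiv (e : ι ≃ κ) (x : κ → R) : esymSeries (x ∘ e) = esymSeries x := by
  simp only [esymSeries, esym_comp_equiv]

lemma coeff_esymSeries_of_card_lt (x : ι → R) {n : ℕ} (hn : Fintype.card ι < n) :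
    coeff n (esymSeries x) = 0 := by
  simp [esymSeries, esym_eq_zero_of_card_lt x hn]

lemma esymSeries_option (x : Option ι → R) :
    esymSeries x = (1 - C (x none) * X) * esymSeries (x ∘ some) := by
  ext (_ | n)
  · simp [esymSeries, esym_zero]
  · simp [esymSeries, esym_option_succ, sub_mul, mul_assoc, coeff_succ_X_mul]
    ring

lemma one_sub_mul_hsymSeries_option (x : Option ι → R) :
    (1 - C (x none) * X) * hsymSeries x = hsymSeries (x ∘ some) := by
  ext (_ | n)
  · simp [hsymSeries, hsym_zero]
  · simp [hsymSeries, hsym_option_succ, sub_mul, mul_assoc, coeff_succ_X_mul]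

lemma hsymSeries_mul_esymSeries_fin (n : ℕ) (x : Fin n → R) :
    hsymSeries x * esymSeries x = 1 := by
  induction n with
  | zero =>
    have hH : hsymSeries x = 1 := by
      ext (_ | n) <;> simp [hsymSeries, hsym_zero, hsym_of_isEmpty, coeff_one]
    have hE : esymSeries x = 1 := by
      ext (_ | n)
      · simp [esymSeries, esym_zero]
      · simp [coeff_esymSeries_of_card_lt x (Nat.succ_pos n), coeff_one]
    rw [hH, hE, one_mul]
  | succ n ih =>
    set y := x ∘ (finSuccEquiv n).symm
    have hx : x = y ∘ finSuccEquiv n := by ext; simp [y]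
    rw [hx, hsymSeries_comp_equiv, esymSeries_comp_equiv, esymSeries_option, mul_left_comm,
      ← mul_assoc, one_sub_mul_hsymSeries_option, ih]

lemma hsymSeries_mul_esymSeries (x : ι → R) : hsymSeries x * esymSeries x = 1 := by
  have hx : x = (x ∘ (Fintype.equivFin ι).symm) ∘ Fintype.equivFin ι := by ext; simp
  rw [hx, hsymSeries_comp_equiv, esymSeries_comp_equiv, hsymSeries_mul_esymSeries_fin]

lemma esymSeries_mul_mk_pow (x : ι → R) (i : ι) :
    esymSeries x * mk (fun n => x i ^ n) = esymSeries (fun j : {j // j ≠ i} => x j) := by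
  rw [← esymSeries_comp_equiv (Equiv.optionSubtypeNe i), esymSeries_option, mul_right_comm]
  simp [one_sub_C_mul_X_mul_mk_pow, Function.comp_def]

lemma neg_one_pow_mul_hookS_eq_coeff (x : ι → R) (p j : ℕ) :
    (-1) ^ j * hookS x p j =
      coeff j (mk (fun a => coeff (p + 1 + a) (hsymSeries x)) * esymSeries x) := by
  rw [hookS, coeff_mul, mul_sum]
  refine sum_congr rfl fun q hq => ?_
  rw [← mem_antidiagonal.mp hq]
  have hsq : (-1 : R) ^ q.1 * (-1) ^ q.1 = 1 := by rw [← mul_pow]; simp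
  simp only [hsymSeries, esymSeries, coeff_mk, add_right_comm p 1]
  linear_combination (hsym x (p + q.1 + 1) * (-1) ^ q.2 * esym x q.2) * hsq

theorem sum_Icc_pow_mul_hookS_eq_pow (x : ι → R) (i : ι) (p : ℕ) :
    ∑ k ∈ Icc 1 (Fintype.card ι), x i ^ (k - 1) *
        ((-1) ^ (Fintype.card ι - k) * hookS x p (Fintype.card ι - k)) =
      x i ^ (p + Fintype.card ι) := by
  obtain ⟨n, hn⟩ : ∃ n, Fintype.card ι = n + 1 :=
    ⟨_, (Nat.succ_pred_eq_of_pos (Fintype.card_pos_iff.mpr ⟨i⟩)).symm⟩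
  have hcard : Fintype.card {j // j ≠ i} = n := by simp [hn]
  set G : R⟦X⟧ := mk fun m => x i ^ m
  set x' : {j // j ≠ i} → R := fun j => x j
  set H' : R⟦X⟧ := mk fun a => coeff (p + 1 + a) (hsymSeries x)
  have hG : esymSeries x * G = esymSeries x' := esymSeries_mul_mk_pow x i
  have hx' : ∀ m, n < m → coeff m (esymSeries x') = 0 :=
    fun m hm => coeff_esymSeries_of_card_lt x' (hcard ▸ hm)
  rw [hn]
  calc _ = ∑ q ∈ antidiagonal n, coeff q.1 G * ((-1) ^ q.2 * hookS x p q.2) := by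
        rw [← sum_Icc_one_eq_sum_antidiagonal fun a b => coeff a G * ((-1) ^ b * hookS x p b)]
        simp [G]
    _ = coeff n (H' * esymSeries x') := by
        simp only [neg_one_pow_mul_hookS_eq_coeff, ← coeff_mul, ← hG, H']
        ring_nf
    _ = coeff (p + 1 + n) (hsymSeries x * esymSeries x') :=
        (coeff_add_mul_eq_coeff_shift_mul _ _ _ hx').symm
    _ = x i ^ (p + (n + 1)) := by
        rw [← hG, ← mul_assoc, hsymSeries_mul_esymSeries, one_mul, coeff_mk, add_right_comm,
          add_assoc]

end Symmetric

theorem interpolation_stability_general (c d : ℕ) (hcd : c ≤ d) (x v : ℕ → R)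
    (i : ℕ) (hi1 : 1 ≤ i) (hic : i ≤ c) :
    ∑ k ∈ Finset.Icc 1 c, x i ^ (k - 1) *
        (v k + (-1 : R) ^ (c - k) * ∑ l ∈ Finset.Icc (c + 1) d,
          hookS (fun j : Fin c => x ((j : ℕ) + 1)) (l - c - 1) (c - k) * v l) =
      ∑ k ∈ Finset.Icc 1 d, x i ^ (k - 1) * v k := by
  set X : Fin c → R := fun j => x ((j : ℕ) + 1)
  have hX : X ⟨i - 1, by omega⟩ = x i := by simp only [X]; congr 1; omega
  have hhook : ∀ l ∈ Icc (c + 1) d, ∑ k ∈ Icc 1 c,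
      x i ^ (k - 1) * ((-1) ^ (c - k) * hookS X (l - c - 1) (c - k)) = x i ^ (l - 1) := by
    intro l hl
    have := sum_Icc_pow_mul_hookS_eq_pow X ⟨i - 1, by omega⟩ (l - c - 1)
    rwa [Fintype.card_fin, hX, show l - c - 1 + c = l - 1 by grind] at this
  calc _ = ∑ k ∈ Icc 1 c, x i ^ (k - 1) * v k + ∑ l ∈ Icc (c + 1) d, (∑ k ∈ Icc 1 c,
        x i ^ (k - 1) * ((-1) ^ (c - k) * hookS X (l - c - 1) (c - k))) * v l := by
        simp only [mul_add, sum_add_distrib, mul_sum, sum_mul, mul_assoc]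
        rw [sum_comm]
    _ = ∑ k ∈ Icc 1 c, x i ^ (k - 1) * v k + ∑ l ∈ Icc (c + 1) d, x i ^ (l - 1) * v l := by
        congr 1
        exact sum_congr rfl fun l hl => by rw [hhook l hl]
    _ = ∑ k ∈ Icc 1 d, x i ^ (k - 1) * v k := by
        rw [Icc_add_one_left_eq_Ioc, ← zero_add 1, Icc_add_one_left_eq_Ioc,
          Icc_add_one_left_eq_Ioc, sum_Ioc_consecutive _ (Nat.zero_le c) hcd]

theorem interpolation_stability (c d : ℕ) (hc : 1 ≤ c) (hcd : c ≤ d) (x v : ℕ → R)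
    (i : ℕ) (hi1 : 1 ≤ i) (hic : i ≤ c) :
    ∑ k ∈ Finset.Icc 1 c, x i ^ (k - 1) *
        (v k + (-1 : R) ^ (c - k) * ∑ l ∈ Finset.Icc (c + 1) d,
          hookS (fun j : Fin c => x ((j : ℕ) + 1)) (l - c - 1) (c - k) * v l) =
      ∑ k ∈ Finset.Icc 1 d, x i ^ (k - 1) * v k :=
  interpolation_stability_general c d hcd x v i hi1 hic
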